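/- Let f : [1,∞) → [1,∞) have regular growth exponent 0 with δ(r) := log f(r)/log r nonincreasing. Let Ψ(r) → ∞, Ξ(r) ↓ 0 and η(r) ↓ 0 as r → ∞, with η(r) ≥ r^{−1/2} and log log(1/Ξ(r)) + log(1/η(r)) ≤ C/δ(r) for some constant C > 0 and all large r. Then, setting s(r) = η(r)·r / log(1/Ξ(η(r)r)), one has (log(1/Ξ(η(r)r))) · f(s(r)) / f(r) → ∞ as r → ∞. -/

import Mathlib

/-!
Write `δ(r) = log f(r) / log r` and `L(r) = log (1/Ξ(η(r) r))`, so that `s(r) = η(r) r / L(r)`.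
Since `δ` is nonincreasing and `s ≤ r`, `f(s) ≥ s^δ(r)` while `f(r) = r^δ(r)`, hence
`f(s)/f(r) ≥ (η/L)^δ(r) = exp(-δ(r) log(L/η))`. As `Ξ` is antitone and `η r ≤ r`, `L(r) ≤ log(1/Ξ(r))`,
and the hypothesis on `log log(1/Ξ) + log(1/η)` bounds the exponent by `C`. Thus the quantity is at
least `e^{-C} L(r)`, and `L(r) → ∞` because `η(r) r ≥ √r → ∞` and `Ξ → 0`.
-/

/-- Regular growth exponent `χ` (ratio formulation). -/
def HasRegularGrowthExponent (f : ℝ → ℝ) (χ : ℝ) : Prop :=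
  ∀ ε : ℝ, 0 < ε → ∃ β r₀ c : ℝ, 1 ≤ β ∧ 1 ≤ r₀ ∧ 1 ≤ c ∧
    ∀ r α : ℝ, r₀ ≤ r → 1 ≤ α →
      (β ≤ α → α ^ (χ - ε) ≤ f (α * r) / f r ∧ f (α * r) / f r ≤ α ^ (χ + ε)) ∧
      (α < β → c⁻¹ ≤ f (α * r) / f r ∧ f (α * r) / f r ≤ c)

open Real Filter Topology

lemma rpow_logRatio_self {f : ℝ → ℝ} {r : ℝ} (hr : 1 < r) (hf : 0 < f r) :
    r ^ (log (f r) / log r) = f r := by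
  rw [rpow_def_of_pos (one_pos.trans hr), mul_div_cancel₀ _ (log_pos hr).ne', exp_log hf]

lemma rpow_le_of_antitone_logRatio {f : ℝ → ℝ} (hf1 : ∀ r : ℝ, 1 ≤ r → 1 ≤ f r)
    (hδmono : ∀ r s : ℝ, 1 < r → r ≤ s → log (f s) / log s ≤ log (f r) / log r)
    {s r : ℝ} (hs : 1 ≤ s) (hsr : s ≤ r) : s ^ (log (f r) / log r) ≤ f s := by
  rcases hs.eq_or_lt with rfl | hs
  · simpa using hf1 1 le_rfl
  calc s ^ (log (f r) / log r) ≤ s ^ (log (f s) / log s) :=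
        rpow_le_rpow_of_exponent_le hs.le (hδmono s r hs hsr)
    _ = f s := rpow_logRatio_self hs (one_pos.trans_le (hf1 s hs.le))

lemma div_rpow_logRatio_le_div {f : ℝ → ℝ} (hf1 : ∀ r : ℝ, 1 ≤ r → 1 ≤ f r)
    (hδmono : ∀ r s : ℝ, 1 < r → r ≤ s → log (f s) / log s ≤ log (f r) / log r)
    {s r : ℝ} (hs : 1 ≤ s) (hsr : s ≤ r) (hr : 1 < r) :
    (s / r) ^ (log (f r) / log r) ≤ f s / f r := by
  have hfr : 0 < f r := one_pos.trans_le (hf1 r hr.le)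
  rw [div_rpow (zero_le_one.trans hs) (zero_le_one.trans hr.le), rpow_logRatio_self hr hfr]
  exact div_le_div_of_nonneg_right (rpow_le_of_antitone_logRatio hf1 hδmono hs hsr) hfr.le

lemma exp_neg_le_rpow {x δ C : ℝ} (hx : 0 < x) (h : δ * log x⁻¹ ≤ C) : exp (-C) ≤ x ^ δ := by
  rw [log_inv] at h
  rw [rpow_def_of_pos hx]
  exact exp_le_exp.mpr (by linarith)

lemma exp_neg_le_div_of_logRatio_bound {f : ℝ → ℝ} (hf1 : ∀ r : ℝ, 1 ≤ r → 1 ≤ f r)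
    (hδmono : ∀ r s : ℝ, 1 < r → r ≤ s → log (f s) / log s ≤ log (f r) / log r)
    {C η L r : ℝ} (hC : 0 ≤ C) (hr : 1 < r) (hη : 0 < η) (hL : 0 < L)
    (hs1 : 1 ≤ η * r / L) (hsr : η * r / L ≤ r)
    (hbound : log L + log (1 / η) ≤ C / (log (f r) / log r)) :
    exp (-C) ≤ f (η * r / L) / f r := by
  set δ := log (f r) / log r
  have hδ : 0 ≤ δ := div_nonneg (log_nonneg (hf1 r hr.le)) (log_pos hr).le
  have hexponent : δ * log (η / L)⁻¹ ≤ C := by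
    rw [inv_div, log_div hL.ne' hη.ne', sub_eq_add_neg, ← log_inv, ← one_div]
    rcases hδ.eq_or_lt with hδ0 | hδpos
    · rw [← hδ0, zero_mul]; exact hC
    · rwa [mul_comm, ← le_div_iff₀ hδpos]
  calc exp (-C) ≤ (η / L) ^ δ := exp_neg_le_rpow (div_pos hη hL) hexponent
    _ = (η * r / L / r) ^ δ := by field_simp
    _ ≤ f (η * r / L) / f r := div_rpow_logRatio_le_div hf1 hδmono hs1 hsr hr

lemma tendsto_log_one_div_atTop {α : Type*} {l : Filter α} {g : α → ℝ}
    (h0 : Tendsto g l (𝓝 0)) (hpos : ∀ᶠ x in l, 0 < g x) :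
    Tendsto (fun x => log (1 / g x)) l atTop := by
  simpa only [one_div, Function.comp_def, Pi.inv_apply] using
    tendsto_log_atTop.comp (tendsto_nhdsWithin_of_tendsto_nhds_of_eventually_within _ h0
      hpos).inv_tendsto_nhdsGT_zero

lemma tendsto_mul_id_atTop_of_rpow_neg_half_le {η : ℝ → ℝ}
    (hηlb : ∀ r : ℝ, 1 ≤ r → r ^ (-(1/2) : ℝ) ≤ η r) :
    Tendsto (fun r => η r * r) atTop atTop := by
  refine tendsto_atTop_mono' _ ?_ (tendsto_rpow_atTop (by norm_num : (0:ℝ) < 1/2))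
  filter_upwards [eventually_ge_atTop 1] with r hr
  calc r ^ ((1:ℝ)/2) = r ^ (-(1/2) : ℝ) * r := by
        rw [← rpow_add_one (by positivity)]; norm_num
    _ ≤ η r * r := by gcongr; exact hηlb r hr

theorem regzero_lemma_general (f Ξ η : ℝ → ℝ) (C : ℝ) (hC : 0 < C)
    (hf1 : ∀ r : ℝ, 1 ≤ r → 1 ≤ f r)
    (hδmono : ∀ r s : ℝ, 1 < r → r ≤ s →
      Real.log (f s) / Real.log s ≤ Real.log (f r) / Real.log r)
    (hΞanti : Antitone Ξ)
    (hΞ0 : Filter.Tendsto Ξ Filter.atTop (nhds 0))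
    (hΞpos : ∀ r : ℝ, 1 ≤ r → 0 < Ξ r)
    (hη0 : Filter.Tendsto η Filter.atTop (nhds 0))
    (hηlb : ∀ r : ℝ, 1 ≤ r → r ^ (-(1/2) : ℝ) ≤ η r)
    (hbound : ∃ r₃ : ℝ, ∀ r : ℝ, r₃ ≤ r →
      Real.log (Real.log (1 / Ξ r)) + Real.log (1 / η r)
        ≤ C / (Real.log (f r) / Real.log r))
    (hs : ∃ r₄ : ℝ, ∀ r : ℝ, r₄ ≤ r →
      1 ≤ η r * r / Real.log (1 / Ξ (η r * r)) ∧
      η r * r / Real.log (1 / Ξ (η r * r)) ≤ r) :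
    Filter.Tendsto
      (fun r : ℝ =>
        Real.log (1 / Ξ (η r * r)) *
          f (η r * r / Real.log (1 / Ξ (η r * r))) / f r)
      Filter.atTop Filter.atTop := by
  obtain ⟨r₃, hr₃⟩ := hbound
  obtain ⟨r₄, hr₄⟩ := hs
  have hu := tendsto_mul_id_atTop_of_rpow_neg_half_le hηlb
  have hL : Tendsto (fun r => log (1 / Ξ (η r * r))) atTop atTop :=
    tendsto_log_one_div_atTop (hΞ0.comp hu)
      (hu.eventually (eventually_ge_atTop 1) |>.mono fun r hr => hΞpos _ hr)
  refine tendsto_atTop_mono' _ ?_ (hL.atTop_mul_const (exp_pos (-C)))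
  filter_upwards [eventually_gt_atTop 1, eventually_ge_atTop r₃, eventually_ge_atTop r₄,
    hη0.eventually (gt_mem_nhds one_pos), hL.eventually_gt_atTop 0,
    hu.eventually_ge_atTop 1] with r hr hr₃r hr₄r hη1 hLpos hu1
  have hηpos : 0 < η r := (rpow_pos_of_pos (one_pos.trans hr) _).trans_le (hηlb r hr.le)
  have hL_le : log (1 / Ξ (η r * r)) ≤ log (1 / Ξ r) :=
    log_le_log (one_div_pos.mpr (hΞpos _ hu1)) <| one_div_le_one_div_of_le (hΞpos r hr.le)
      (hΞanti (mul_le_of_le_one_left (by linarith) hη1.le))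
  obtain ⟨hs1, hsr⟩ := hr₄ r hr₄r
  have hbound_r : log (log (1 / Ξ (η r * r))) + log (1 / η r) ≤ C / (log (f r) / log r) :=
    (add_le_add_left (log_le_log hLpos hL_le) _).trans (hr₃ r hr₃r)
  calc log (1 / Ξ (η r * r)) * exp (-C)
      ≤ log (1 / Ξ (η r * r)) * (f (η r * r / log (1 / Ξ (η r * r))) / f r) := by
        gcongr
        exact exp_neg_le_div_of_logRatio_bound hf1 hδmono hC.le hr hηpos hLpos hs1 hsr hbound_r
    _ = _ := (mul_div_assoc _ _ _).symm

/-- Lemma 2.1: with `s(r) = η(r)·r / log(1/Ξ(η(r)·r))`, one has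
`log(1/Ξ(η(r)r)) · f(s(r)) / f(r) → ∞` as `r → ∞`. -/
theorem regzero_lemma (f Ψ Ξ η : ℝ → ℝ) (C : ℝ) (hC : 0 < C)
    (hf1 : ∀ r : ℝ, 1 ≤ r → 1 ≤ f r)
    (hreg : HasRegularGrowthExponent f 0)
    (hδmono : ∀ r s : ℝ, 1 < r → r ≤ s →
      Real.log (f s) / Real.log s ≤ Real.log (f r) / Real.log r)
    (hΨ : Filter.Tendsto Ψ Filter.atTop Filter.atTop)
    (hΞanti : Antitone Ξ)
    (hΞ0 : Filter.Tendsto Ξ Filter.atTop (nhds 0))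
    (hΞpos : ∀ r : ℝ, 1 ≤ r → 0 < Ξ r)
    (hΞlt1 : ∃ r₂ : ℝ, ∀ r : ℝ, r₂ ≤ r → Ξ r < 1)
    (hηanti : Antitone η)
    (hη0 : Filter.Tendsto η Filter.atTop (nhds 0))
    (hηlb : ∀ r : ℝ, 1 ≤ r → r ^ (-(1/2) : ℝ) ≤ η r)
    (hbound : ∃ r₃ : ℝ, ∀ r : ℝ, r₃ ≤ r →
      Real.log (Real.log (1 / Ξ r)) + Real.log (1 / η r)
        ≤ C / (Real.log (f r) / Real.log r))
    (hs : ∃ r₄ : ℝ, ∀ r : ℝ, r₄ ≤ r →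
      1 ≤ η r * r / Real.log (1 / Ξ (η r * r)) ∧
      η r * r / Real.log (1 / Ξ (η r * r)) ≤ r) :
    Filter.Tendsto
      (fun r : ℝ =>
        Real.log (1 / Ξ (η r * r)) *
          f (η r * r / Real.log (1 / Ξ (η r * r))) / f r)
      Filter.atTop Filter.atTop :=
  regzero_lemma_general f Ξ η C hC hf1 hδmono hΞanti hΞ0 hΞpos hη0 hηlb hbound hs
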